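/- Let G=(V,E) be a connected graph with at least two vertices, let t ≥ 2 be an integer, let x ∈ V and let w = x^{j-1} z_j z_{j+1} ⋯ z_t ∈ V^t with 1 ≤ j ≤ t−1 and x ≠ z_j. Then d_{S(G,t)}(x^t, w) = min_{P_i ∈ 𝒫(x,z_j)} { d_{S(G,t-j)}( (z_j^{(i)})^{t-j}, z_{j+1}⋯z_t ) } + (2^{t-j+1} − 1)·d_G(x, z_j) − (2^{t-j} − 1), where the minimum is over all shortest paths P_i between x and z_j in G, and z_j^{(i)} denotes the neighbor of z_j lying on P_i. -/

import Mathlib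

/-!
For a word `c u` with first letter `c ≠ x`, the distance from `x^{t+1}` is the minimum, over the
neighbours `y` of `c`, of `(2^{t+1} - 1)·d(x,y) + 2^t + d(y^t, u)`. This is the length of the walk
`x^{t+1} ⇝ y^{t+1} ⇝ y c^t — c y^t ⇝ c u`, so the minimum is an upper bound; it is also a lower
bound because, as a function of the target word, it changes by at most one along each edge of
`S(G,t+1)` and vanishes at `x^{t+1}`. Both halves use `d(a^t, b^t) = (2^t - 1)·d(a,b)`, whose lower
bound is the same Lipschitz argument applied to `∑ i, 2^{t-1-i}·d(a, u_i)`. A neighbour `y` of `c`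
that is not on a shortest `x`–`c` path can be traded for one that is without increasing the cost,
so the minimum runs over shortest paths; and a prefix of `x`'s is stripped one letter at a time,
since `d(x^{t+1}, x u) = d(x^t, u)`.
-/

/-- The generalized Sierpiński graph `S(G,t)` of a base graph `G`: vertices are words of
length `t` over the vertex set (encoded as `Fin t → V`); two words are adjacent iff they are
of the form `w x y^{d-1}` and `w y x^{d-1}` for some edge `{x,y}` of `G`. -/
def SierpinskiGraph {V : Type*} (G : SimpleGraph V) (t : ℕ) : SimpleGraph (Fin t → V) where
  Adj u v := ∃ i : Fin t, G.Adj (u i) (v i) ∧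
      (∀ j : Fin t, j < i → u j = v j) ∧
      (∀ j : Fin t, i < j → u j = v i ∧ v j = u i)
  symm := by
    constructor
    rintro u v ⟨i, h1, h2, h3⟩
    exact ⟨i, h1.symm, fun j hj => (h2 j hj).symm, fun j hj => ⟨(h3 j hj).2, (h3 j hj).1⟩⟩
  loopless := by
    constructor
    rintro u ⟨i, h1, -, -⟩
    exact G.loopless.irrefl _ h1

namespace SimpleGraph

variable {V W : Type*} {G : SimpleGraph V} {H : SimpleGraph W}

theorem Reachable.le_add_dist_of_forall_adj {f : W → ℕ} (hf : ∀ u v, H.Adj u v → f u ≤ f v + 1)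
    {u v : W} (h : H.Reachable u v) : f v ≤ f u + H.dist u v := by
  obtain ⟨p, hp⟩ := h.exists_walk_length_eq_dist
  rw [← hp]
  clear hp h
  induction p with
  | nil => simp
  | @cons a b c hadj p ih =>
    have := hf b a hadj.symm
    rw [Walk.length_cons]
    omega

theorem Connected.dist_le_mul_dist (hG : G.Connected) (hH : H.Connected) {f : V → W} {K : ℕ}
    (hf : ∀ a b, G.Adj a b → H.dist (f a) (f b) ≤ K) (a b : V) :
    H.dist (f a) (f b) ≤ K * G.dist a b := by
  obtain ⟨p, hp⟩ := hG.exists_walk_length_eq_dist a b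
  rw [← hp]
  clear hp
  induction p with
  | nil => simp
  | @cons a b c hadj p ih =>
    rw [Walk.length_cons, mul_add, mul_one]
    have := hH.dist_triangle (u := f a) (v := f b) (w := f c)
    have := hf a b hadj
    omega

theorem Walk.dist_penultimate_add_one {x c : V} (q : G.Walk x c) (hq : q.length = G.dist x c)
    (hne : x ≠ c) : G.dist x q.penultimate + 1 = G.dist x c := by
  have hnil : ¬q.Nil := fun h => hne h.eq
  have hlast : G.dist q.penultimate c = 1 := dist_eq_one_iff_adj.mpr (q.adj_penultimate hnil)
  have hle : G.dist x q.penultimate ≤ q.length - 1 := by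
    simpa [Walk.length_dropLast] using dist_le q.dropLast
  have hge := (q.adj_penultimate hnil).reachable.dist_triangle_right x
  have hpos : 0 < q.length := by
    by_contra h0
    exact hnil (Walk.length_eq_zero_iff.mp (by omega))
  omega

theorem Connected.exists_adj_dist_add_one_eq (hG : G.Connected) {x c : V} (hne : x ≠ c) :
    ∃ y, G.Adj y c ∧ G.dist x y + 1 = G.dist x c := by
  obtain ⟨q, hq⟩ := hG.exists_walk_length_eq_dist x c
  exact ⟨q.penultimate, q.adj_penultimate fun h => hne h.eq, q.dist_penultimate_add_one hq hne⟩

theorem Connected.exists_path_penultimate_eq (hG : G.Connected) {x y c : V} (hy : G.Adj y c)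
    (hd : G.dist x y + 1 = G.dist x c) :
    ∃ q : G.Walk x c, q.IsPath ∧ q.length = G.dist x c ∧ q.penultimate = y := by
  obtain ⟨p, hp⟩ := hG.exists_walk_length_eq_dist x y
  have hlen : (p.concat hy).length = G.dist x c := by rw [Walk.length_concat, hp, hd]
  exact ⟨p.concat hy, (p.concat hy).isPath_of_length_eq_dist hlen, hlen, p.penultimate_concat hy⟩

end SimpleGraph

namespace SierpinskiGraph

open SimpleGraph

variable {V : Type*} {G : SimpleGraph V}

theorem adj_cons_cons_iff {t : ℕ} {a b : V} {u v : Fin t → V} :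
    (SierpinskiGraph G (t + 1)).Adj (Fin.cons a u) (Fin.cons b v) ↔
      (a = b ∧ (SierpinskiGraph G t).Adj u v) ∨
        (G.Adj a b ∧ u = (fun _ => b) ∧ v = fun _ => a) := by
  simp only [SierpinskiGraph, Fin.exists_fin_succ, Fin.forall_fin_succ, Fin.cons_zero,
    Fin.cons_succ, Fin.succ_lt_succ_iff, Fin.succ_pos, Fin.not_lt_zero, IsEmpty.forall_iff,
    implies_true, true_and, forall_and, funext_iff]
  grind

variable (G) in
def consHom (t : ℕ) (a : V) : SierpinskiGraph G t →g SierpinskiGraph G (t + 1) where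
  toFun u := (Fin.cons a u : Fin (t + 1) → V)
  map_rel' h := adj_cons_cons_iff.mpr (Or.inl ⟨rfl, h⟩)

theorem cons_const (t : ℕ) (a : V) : (Fin.cons a (fun _ => a) : Fin (t + 1) → V) = fun _ => a :=
  Fin.cons_self_tail (fun _ => a)

theorem adj_cons_const_cons_const {t : ℕ} {a b : V} (h : G.Adj a b) :
    (SierpinskiGraph G (t + 1)).Adj (Fin.cons a fun _ => b) (Fin.cons b fun _ => a) :=
  adj_cons_cons_iff.mpr (Or.inr ⟨h, rfl, rfl⟩)

theorem connected (hG : G.Connected) : ∀ t, (SierpinskiGraph G t).Connected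
  | 0 => haveI := hG.nonempty; ⟨fun u v => Subsingleton.elim u v ▸ .refl u⟩
  | t + 1 => by
    have := hG.nonempty
    have ih := connected hG t
    have key : ∀ {a b : V}, G.Walk a b → ∀ u v : Fin t → V,
        (SierpinskiGraph G (t + 1)).Reachable (Fin.cons a u) (Fin.cons b v) := by
      intro a b p
      induction p with
      | nil => exact fun u v => (ih u v).map (consHom G t _)
      | @cons a c b h p ihp =>
        exact fun u v => ((ih u fun _ => c).map (consHom G t a)).trans
          ((adj_cons_const_cons_const h).reachable.trans (ihp _ v))
    refine ⟨fun u v => ?_⟩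
    rw [← Fin.cons_self_tail u, ← Fin.cons_self_tail v]
    exact key (hG (u 0) (v 0)).some _ _

theorem dist_cons_cons_le (hG : G.Connected) {t : ℕ} (a : V) (u v : Fin t → V) :
    (SierpinskiGraph G (t + 1)).dist (Fin.cons a u) (Fin.cons a v) ≤
      (SierpinskiGraph G t).dist u v := by
  obtain ⟨p, hp⟩ := (connected hG t).exists_walk_length_eq_dist u v
  rw [← hp, ← p.length_map (consHom G t a)]
  exact dist_le _

variable (G) in
noncomputable def weightedDist (x : V) : (t : ℕ) → (Fin t → V) → ℕ
  | 0, _ => 0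
  | t + 1, u => 2 ^ t * G.dist x (u 0) + weightedDist x t (Fin.tail u)

theorem weightedDist_cons (x a : V) {t : ℕ} (u : Fin t → V) :
    weightedDist G x (t + 1) (Fin.cons a u) = 2 ^ t * G.dist x a + weightedDist G x t u := by
  simp [weightedDist]

theorem weightedDist_const (x b : V) (t : ℕ) :
    weightedDist G x t (fun _ => b) = (2 ^ t - 1) * G.dist x b := by
  induction t with
  | zero => simp [weightedDist]
  | succ t ih =>
    rw [← cons_const, weightedDist_cons, ih, ← add_mul, pow_succ]
    have := Nat.one_le_two_pow (n := t)
    congr 1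
    omega

theorem weightedDist_le_of_adj (x : V) :
    ∀ {t : ℕ} {u v : Fin t → V}, (SierpinskiGraph G t).Adj u v →
      weightedDist G x t u ≤ weightedDist G x t v + 1
  | 0, u, v, h => absurd h (by simp [Subsingleton.elim u v])
  | t + 1, u, v, h => by
    obtain ⟨a, u, rfl⟩ := Fin.exists_cons u
    obtain ⟨b, v, rfl⟩ := Fin.exists_cons v
    rw [weightedDist_cons, weightedDist_cons]
    rcases adj_cons_cons_iff.mp h with ⟨rfl, huv⟩ | ⟨hab, rfl, rfl⟩
    · have := weightedDist_le_of_adj x huv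
      omega
    · rw [weightedDist_const, weightedDist_const]
      have := hab.symm.reachable.dist_triangle_right x
      have : G.dist b a = 1 := dist_eq_one_iff_adj.mpr hab.symm
      obtain ⟨k, hk⟩ : ∃ k, 2 ^ t = k + 1 := ⟨_, (Nat.succ_pred_eq_of_pos (Nat.two_pow_pos t)).symm⟩
      rw [hk, Nat.add_sub_cancel]
      nlinarith

theorem dist_const_const_le_of_adj (hG : G.Connected) {a b : V} (hab : G.Adj a b) :
    ∀ t, (SierpinskiGraph G t).dist (fun _ => a) (fun _ => b) ≤ 2 ^ t - 1
  | 0 => by simp [Subsingleton.elim (fun _ : Fin 0 => a) fun _ => b]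
  | t + 1 => by
    have ih := dist_const_const_le_of_adj hG hab t
    have hS := connected hG (t + 1)
    rw [← cons_const t a, ← cons_const t b]
    calc _ ≤ (SierpinskiGraph G (t + 1)).dist (Fin.cons a fun _ => a) (Fin.cons a fun _ => b) +
          (SierpinskiGraph G (t + 1)).dist (Fin.cons a fun _ => b) (Fin.cons b fun _ => a) +
          (SierpinskiGraph G (t + 1)).dist (Fin.cons b fun _ => a) (Fin.cons b fun _ => b) :=
          hS.dist_triangle.trans (add_le_add_left hS.dist_triangle _)
      _ ≤ (2 ^ t - 1) + 1 + (2 ^ t - 1) := by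
        gcongr
        · exact (dist_cons_cons_le hG a _ _).trans ih
        · exact (dist_eq_one_iff_adj.mpr (adj_cons_const_cons_const hab)).le
        · exact (dist_cons_cons_le hG b _ _).trans ih
      _ = 2 ^ (t + 1) - 1 := by
        have := Nat.one_le_two_pow (n := t)
        rw [pow_succ]
        omega

theorem dist_const_const (hG : G.Connected) (t : ℕ) (a b : V) :
    (SierpinskiGraph G t).dist (fun _ => a) (fun _ => b) = (2 ^ t - 1) * G.dist a b := by
  apply le_antisymm
  · exact hG.dist_le_mul_dist (connected hG t) (fun _ _ h => dist_const_const_le_of_adj hG h t) a b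
  · simpa [weightedDist_const] using
      (connected hG t (fun _ => a) fun _ => b).le_add_dist_of_forall_adj
        fun _ _ => weightedDist_le_of_adj (G := G) a

variable (G) in
/-- The length of the walk `x^{t+1} ⇝ y^{t+1} ⇝ y c^t — c y^t ⇝ c u` from `x^{t+1}` to `c u`,
for a neighbour `y` of `c`. -/
noncomputable def viaCost (t : ℕ) (x y : V) (u : Fin t → V) : ℕ :=
  (2 ^ (t + 1) - 1) * G.dist x y + 2 ^ t + (SierpinskiGraph G t).dist (fun _ => y) u

open scoped Classical in
variable (G) in
noncomputable def distFormula (t : ℕ) (x : V) (v : Fin (t + 1) → V) : ℕ :=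
  if v 0 = x then (SierpinskiGraph G t).dist (fun _ => x) (Fin.tail v)
  else ⨅ y : {y // G.Adj y (v 0)}, viaCost G t x y (Fin.tail v)

variable {t : ℕ} {x c : V}

theorem distFormula_cons_self (u : Fin t → V) :
    distFormula G t x (Fin.cons x u) = (SierpinskiGraph G t).dist (fun _ => x) u := by
  simp [distFormula]

theorem distFormula_cons_le (hc : c ≠ x) {y : V} (hy : G.Adj y c) (u : Fin t → V) :
    distFormula G t x (Fin.cons c u) ≤ viaCost G t x y u := by
  rw [distFormula, if_neg (by simpa using hc)]
  exact ciInf_le' (fun y : {y // G.Adj y c} => viaCost G t x y u) ⟨y, hy⟩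

theorem exists_distFormula_cons_eq (hG : G.Connected) (hc : c ≠ x) (u : Fin t → V) :
    ∃ y, G.Adj y c ∧ distFormula G t x (Fin.cons c u) = viaCost G t x y u := by
  obtain ⟨y, hy, -⟩ := hG.exists_adj_dist_add_one_eq hc.symm
  have : Nonempty {y // G.Adj y c} := ⟨⟨y, hy⟩⟩
  obtain ⟨⟨y, hy⟩, hmin⟩ := ciInf_mem fun y : {y // G.Adj y c} => viaCost G t x y u
  refine ⟨y, hy, ?_⟩
  rw [distFormula, if_neg (by simpa using hc)]
  exact hmin.symm

theorem distFormula_cons_le_of_adj (hG : G.Connected) (c : V) {u v : Fin t → V}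
    (huv : (SierpinskiGraph G t).Adj u v) :
    distFormula G t x (Fin.cons c u) ≤ distFormula G t x (Fin.cons c v) + 1 := by
  have step : ∀ y, (SierpinskiGraph G t).dist (fun _ => y) u ≤
      (SierpinskiGraph G t).dist (fun _ => y) v + 1 := fun y =>
    (dist_eq_one_iff_adj.mpr huv.symm).symm ▸ (connected hG t).dist_triangle
  by_cases hc : c = x
  · subst hc
    simpa only [distFormula_cons_self] using step c
  · obtain ⟨y, hy, heq⟩ := exists_distFormula_cons_eq hG hc v
    rw [heq]
    refine (distFormula_cons_le hc hy u).trans ?_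
    have := step y
    unfold viaCost
    omega

theorem exists_viaCost_const_le (hG : G.Connected) {p q y : V} (hpq : G.Adj p q) (hp : p ≠ x)
    (hyq : G.Adj y q) :
    ∃ y', G.Adj y' p ∧ viaCost G t x y' (fun _ => q) ≤ viaCost G t x y (fun _ => p) + 1 := by
  simp only [viaCost, dist_const_const hG]
  have hyq1 : G.dist y q = 1 := dist_eq_one_iff_adj.mpr hyq
  have := Nat.one_le_two_pow (n := t)
  have := pow_succ 2 t
  by_cases hyp : y = p
  · subst hyp
    obtain ⟨y', hy', hd⟩ := hG.exists_adj_dist_add_one_eq (Ne.symm hp)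
    have hy'q : G.dist y' q ≤ 2 := by
      have := hG.dist_triangle (u := y') (v := y) (w := q)
      rw [dist_eq_one_iff_adj.mpr hy'] at this
      omega
    refine ⟨y', hy', ?_⟩
    have := Nat.mul_le_mul_left (2 ^ t - 1) hy'q
    rw [← hd, mul_add, mul_one, dist_self]
    omega
  by_cases hyp' : G.Adj y p
  · refine ⟨y, hyp', ?_⟩
    rw [hyq1, dist_eq_one_iff_adj.mpr hyp']
    omega
  · refine ⟨q, hpq.symm, ?_⟩
    have hyp2 := Nat.mul_le_mul_left (2 ^ t - 1) (hG.one_lt_dist_of_ne_of_not_adj hyp hyp')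
    have hxq := Nat.mul_le_mul_left (2 ^ (t + 1) - 1) (hyq.reachable.dist_triangle_right x)
    rw [hyq1, mul_add, mul_one] at hxq
    rw [dist_self]
    omega

theorem distFormula_bridge_le (hG : G.Connected) {p q : V} (hpq : G.Adj p q) :
    distFormula G t x (Fin.cons p fun _ => q) ≤ distFormula G t x (Fin.cons q fun _ => p) + 1 := by
  have hconst := dist_const_const hG t
  have hpq1 : G.dist p q = 1 := dist_eq_one_iff_adj.mpr hpq
  have := Nat.one_le_two_pow (n := t)
  by_cases hp : p = x
  · subst hp
    obtain ⟨y, -, heq⟩ := exists_distFormula_cons_eq hG hpq.ne.symm (fun _ => p)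
    rw [distFormula_cons_self, heq, hconst, hpq1, viaCost]
    omega
  by_cases hq : q = x
  · subst hq
    refine (distFormula_cons_le hp hpq.symm _).trans ?_
    rw [distFormula_cons_self, viaCost, hconst, hconst, SimpleGraph.dist_self, dist_comm, hpq1]
    omega
  obtain ⟨y, hyq, heq⟩ := exists_distFormula_cons_eq hG hq (fun _ => p)
  obtain ⟨y', hy', hle⟩ := exists_viaCost_const_le hG hpq hp hyq
  rw [heq]
  exact (distFormula_cons_le hp hy' _).trans hle

theorem distFormula_le_of_adj (hG : G.Connected) {v w : Fin (t + 1) → V}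
    (h : (SierpinskiGraph G (t + 1)).Adj v w) :
    distFormula G t x v ≤ distFormula G t x w + 1 := by
  obtain ⟨a, u, rfl⟩ := Fin.exists_cons v
  obtain ⟨b, u', rfl⟩ := Fin.exists_cons w
  rcases adj_cons_cons_iff.mp h with ⟨rfl, huu'⟩ | ⟨hab, rfl, rfl⟩
  · exact distFormula_cons_le_of_adj hG a huu'
  · exact distFormula_bridge_le hG hab

theorem dist_le_viaCost (hG : G.Connected) {y : V} (hy : G.Adj y c) (u : Fin t → V) :
    (SierpinskiGraph G (t + 1)).dist (fun _ => x) (Fin.cons c u) ≤ viaCost G t x y u := by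
  have hS := connected hG (t + 1)
  have h1 := hS.dist_triangle (u := fun _ => x) (v := fun _ => y) (w := Fin.cons c u)
  have h2 := hS.dist_triangle (u := fun _ => y) (v := Fin.cons y fun _ => c) (w := Fin.cons c u)
  have h3 := hS.dist_triangle (u := Fin.cons y fun _ => c) (v := Fin.cons c fun _ => y)
    (w := Fin.cons c u)
  have h4 : (SierpinskiGraph G (t + 1)).dist (fun _ => y) (Fin.cons y fun _ => c) ≤ 2 ^ t - 1 := by
    rw [← cons_const t y]
    refine (dist_cons_cons_le hG y _ _).trans ?_
    rw [dist_const_const hG, dist_eq_one_iff_adj.mpr hy, mul_one]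
  have h5 := dist_eq_one_iff_adj.mpr (adj_cons_const_cons_const (t := t) hy)
  have h6 := dist_cons_cons_le hG c (fun _ => y) u
  rw [dist_const_const hG] at h1
  have := Nat.one_le_two_pow (n := t)
  unfold viaCost
  omega

theorem dist_eq_distFormula (hG : G.Connected) (x : V) (v : Fin (t + 1) → V) :
    (SierpinskiGraph G (t + 1)).dist (fun _ => x) v = distFormula G t x v := by
  obtain ⟨c, u, rfl⟩ := Fin.exists_cons v
  apply le_antisymm
  · by_cases hc : c = x
    · subst hc
      rw [distFormula_cons_self, ← cons_const t c]
      exact dist_cons_cons_le hG c _ _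
    · obtain ⟨y, hy, heq⟩ := exists_distFormula_cons_eq hG hc u
      exact heq ▸ dist_le_viaCost hG hy u
  · have := (connected hG (t + 1) (fun _ => x) (Fin.cons c u)).le_add_dist_of_forall_adj
      fun _ _ => distFormula_le_of_adj (x := x) hG
    have h0 : distFormula G t x (fun _ => x) = 0 := by
      rw [← cons_const, distFormula_cons_self, dist_self]
    omega

theorem dist_const_cons_self (hG : G.Connected) (x : V) (u : Fin t → V) :
    (SierpinskiGraph G (t + 1)).dist (fun _ => x) (Fin.cons x u) =
      (SierpinskiGraph G t).dist (fun _ => x) u := by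
  rw [dist_eq_distFormula hG, distFormula_cons_self]

theorem exists_adj_dist_add_one_eq_viaCost_le (hG : G.Connected) (hc : c ≠ x) {y : V} (hy : G.Adj y c)
    (u : Fin t → V) :
    ∃ y', G.Adj y' c ∧ G.dist x y' + 1 = G.dist x c ∧ viaCost G t x y' u ≤ viaCost G t x y u := by
  by_cases hpred : G.dist x y + 1 = G.dist x c
  · exact ⟨y, hy, hpred, le_rfl⟩
  obtain ⟨y', hy', hd'⟩ := hG.exists_adj_dist_add_one_eq hc.symm
  refine ⟨y', hy', hd', ?_⟩
  have hxc := hy.reachable.dist_triangle_right x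
  rw [dist_eq_one_iff_adj.mpr hy] at hxc
  have hy'y : G.dist y' y ≤ 2 := by
    have := hG.dist_triangle (u := y') (v := c) (w := y)
    rwa [dist_eq_one_iff_adj.mpr hy', dist_eq_one_iff_adj.mpr hy.symm] at this
  have hD := (connected hG t).dist_triangle (u := fun _ => y') (v := fun _ => y) (w := u)
  rw [dist_const_const hG] at hD
  have := Nat.mul_le_mul_left (2 ^ t - 1) hy'y
  have hA := Nat.mul_le_mul_left (2 ^ (t + 1) - 1) (show G.dist x y' + 1 ≤ G.dist x y by omega)
  rw [mul_add, mul_one] at hA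
  have := Nat.one_le_two_pow (n := t)
  have := pow_succ 2 t
  unfold viaCost
  omega

theorem dist_const_cons_of_ne (hG : G.Connected) (hc : c ≠ x) (u : Fin t → V) :
    (SierpinskiGraph G (t + 1)).dist (fun _ => x) (Fin.cons c u) =
      sInf {d : ℕ | ∃ q : G.Walk x c, q.IsPath ∧ q.length = G.dist x c ∧
          d = (SierpinskiGraph G t).dist (fun _ => q.getVert (q.length - 1)) u}
        + (2 ^ (t + 1) - 1) * G.dist x c - (2 ^ t - 1) := by
  obtain ⟨y₀, hy₀, heq⟩ := exists_distFormula_cons_eq hG hc u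
  obtain ⟨y, hy, hyd, hle⟩ := exists_adj_dist_add_one_eq_viaCost_le hG hc hy₀ u
  have hopt : (SierpinskiGraph G (t + 1)).dist (fun _ => x) (Fin.cons c u) = viaCost G t x y u :=
    le_antisymm (dist_le_viaCost hG hy u) (by rw [dist_eq_distFormula hG, heq]; exact hle)
  have hleast : IsLeast {d : ℕ | ∃ q : G.Walk x c, q.IsPath ∧ q.length = G.dist x c ∧
      d = (SierpinskiGraph G t).dist (fun _ => q.getVert (q.length - 1)) u}
      ((SierpinskiGraph G t).dist (fun _ => y) u) := by
    constructor
    · obtain ⟨q, hqp, hql, hqy⟩ := hG.exists_path_penultimate_eq hy hyd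
      exact ⟨q, hqp, hql, hqy ▸ rfl⟩
    · rintro _ ⟨q, -, hql, rfl⟩
      have hlevel : G.dist x q.penultimate = G.dist x y := by
        have := q.dist_penultimate_add_one hql hc.symm
        omega
      have := hopt ▸ dist_le_viaCost hG (x := x) (q.adj_penultimate fun h => hc h.eq.symm) u
      unfold viaCost at this
      rw [hlevel] at this
      show _ ≤ (SierpinskiGraph G t).dist (fun _ => q.penultimate) u
      omega
  rw [hopt, hleast.csInf_eq, viaCost, ← hyd, mul_add, mul_one]
  have := Nat.one_le_two_pow (n := t)
  have := pow_succ 2 t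
  omega

theorem dist_const_of_const_prefix (hG : G.Connected) (x : V) :
    ∀ (k t n : ℕ) (h : k + t = n) (w : Fin n → V), (∀ i : Fin n, (i : ℕ) < k → w i = x) →
      (SierpinskiGraph G n).dist (fun _ => x) w =
        (SierpinskiGraph G t).dist (fun _ => x) fun i => w (Fin.cast h (Fin.natAdd k i))
  | 0, t, n, h, w, _ => by
    obtain rfl : t = n := by omega
    congr
    funext i
    congr
    ext
    simp
  | k + 1, t, n, h, w, hw => by
    rw [dist_const_of_const_prefix hG x k (t + 1) n (by omega) w fun i hi => hw i (by omega)]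
    have : (fun i : Fin (t + 1) => w (Fin.cast (by omega) (Fin.natAdd k i))) =
        Fin.cons x fun i => w (Fin.cast h (Fin.natAdd (k + 1) i)) := by
      ext i
      refine Fin.cases ?_ (fun i => ?_) i
      · exact hw _ (by simp)
      · simp only [Fin.cons_succ]
        congr 1
        ext
        simp only [Fin.val_cast, Fin.val_natAdd, Fin.val_succ]
        omega
    rw [this, dist_const_cons_self hG]

end SierpinskiGraph

/-- with `t = j + m` (`1 ≤ j ≤ t − 1`, i.e. `j, m ≥ 1`), let
`w = x^{j-1} z_j z_{j+1} ⋯ z_t` with `z_j = z ≠ x`. Then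
`d_{S(G,t)}(x^t, w) = min_{P_i ∈ 𝒫(x,z)} d_{S(G,m)}((z^{(i)})^m, z_{j+1}⋯z_t)
  + (2^{m+1} − 1)·d_G(x,z) − (2^m − 1)`,
the minimum running over all shortest `x`–`z` paths `P_i` in `G`, where `z^{(i)}` is the
neighbour of `z` on `P_i` (the penultimate vertex of the path). -/
theorem stmt_5 {V : Type*} (G : SimpleGraph V) (hconn : G.Connected)
    (j m : ℕ) (hj : 1 ≤ j)
    (x z : V) (w : Fin (j + m) → V)
    (hpre : ∀ i : Fin (j + m), (i : ℕ) < j - 1 → w i = x)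
    (hz : w ⟨j - 1, by omega⟩ = z) (hzx : z ≠ x) :
    (SierpinskiGraph G (j + m)).dist (fun _ => x) w =
      sInf { d : ℕ | ∃ q : G.Walk x z, q.IsPath ∧ q.length = G.dist x z ∧
          d = (SierpinskiGraph G m).dist (fun _ => q.getVert (q.length - 1))
                (fun i : Fin m => w (Fin.natAdd j i)) }
        + (2 ^ (m + 1) - 1) * G.dist x z - (2 ^ m - 1) := by
  have hsplit : j - 1 + (m + 1) = j + m := by omega
  have hword : (fun i : Fin (m + 1) => w (Fin.cast hsplit (Fin.natAdd (j - 1) i))) =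
      Fin.cons z fun i : Fin m => w (Fin.natAdd j i) := by
    ext i
    refine Fin.cases ?_ (fun i => ?_) i
    · rw [← hz]
      congr 1
    · simp only [Fin.cons_succ]
      congr 1
      ext
      simp only [Fin.val_cast, Fin.val_natAdd, Fin.val_succ]
      omega
  rw [SierpinskiGraph.dist_const_of_const_prefix hconn x (j - 1) (m + 1) (j + m) hsplit w hpre,
    hword, SierpinskiGraph.dist_const_cons_of_ne hconn hzx]
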